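/- Let U be a real Hilbert space, let φ : U → ℝ ∪ {+∞} be proper and lower semicontinuous, let u, g ∈ U and r, t > 0. If q_r ∈ prox_{rφ}(u − r·g) and q_t ∈ prox_{tφ}(u − t·g), then (t − r)·(⟨g, q_r − q_t⟩ + φ(q_r) − φ(q_t)) ≥ 0; that is, the quantity Q(s) = ⟨g, q_s − u⟩ + φ(q_s) − φ(u) is nonincreasing in s along any selection of proximal points. -/

import Mathlib

/-! Expanding `‖v - (u - s • g)‖² = ‖v - u‖² + 2s⟪g, v - u⟫ + s²‖g‖²`, minimality of `q_s`
against any `v` reads, with `Q(v) = ⟪g, v - u⟫ + φ v`,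
`‖q_s - u‖² + 2s Q(q_s) ≤ ‖v - u‖² + 2s Q(v)` once multiplied by `2s`.
Testing `q_r` against `q_t` and `q_t` against `q_r` and adding, the squared norms cancel and
leave `2(t - r)(Q(q_r) - Q(q_t)) ≥ 0`. -/

open Filter Topology RealInnerProductSpace

/-- `q` belongs to the proximal set `prox_{rφ}(u)`, i.e. `q` is a global minimizer of
`v ↦ (1/(2r))‖v − u‖² + φ(v)` (with `φ` taking values in `ℝ ∪ {+∞} ⊆ EReal`). -/
def IsProxPt {U : Type*} [NormedAddCommGroup U] [InnerProductSpace ℝ U]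
    (φ : U → EReal) (r : ℝ) (u q : U) : Prop :=
  ∀ v : U, ((1 / (2 * r) * ‖q - u‖ ^ 2 : ℝ) : EReal) + φ q ≤
    ((1 / (2 * r) * ‖v - u‖ ^ 2 : ℝ) : EReal) + φ v

section

variable {U : Type*} [NormedAddCommGroup U] [InnerProductSpace ℝ U]
  {φ : U → EReal} {r : ℝ} {u q v : U}

theorem norm_sub_sub_smul_sq (u v g : U) (r : ℝ) :
    ‖v - (u - r • g)‖ ^ 2 = ‖v - u‖ ^ 2 + 2 * r * ⟪g, v - u⟫ + r ^ 2 * ‖g‖ ^ 2 := by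
  rw [show v - (u - r • g) = (v - u) + r • g by abel, norm_add_sq_real, real_inner_smul_right,
    norm_smul, mul_pow, Real.norm_eq_abs, sq_abs, real_inner_comm]
  ring

namespace IsProxPt

theorem ne_top (h : IsProxPt φ r u q) (hproper : ∃ x, φ x ≠ ⊤) : φ q ≠ ⊤ := by
  obtain ⟨x, hx⟩ := hproper
  intro hq
  have hle := h x
  rw [hq, EReal.add_top_of_ne_bot (EReal.coe_ne_bot _), top_le_iff] at hle
  exact (EReal.add_lt_top (EReal.coe_ne_top _) hx).ne hle

theorem le_of_eq_coe {a b : ℝ} (h : IsProxPt φ r u q) (ha : φ q = a) (hb : φ v = b) :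
    1 / (2 * r) * ‖q - u‖ ^ 2 + a ≤ 1 / (2 * r) * ‖v - u‖ ^ 2 + b := by
  have hle := h v
  rw [ha, hb] at hle
  exact_mod_cast hle

theorem le_of_sub_smul {g : U} {a b : ℝ} (h : IsProxPt φ r (u - r • g) q) (hr : 0 < r)
    (ha : φ q = a) (hb : φ v = b) :
    ‖q - u‖ ^ 2 + 2 * r * (⟪g, q - u⟫ + a) ≤ ‖v - u‖ ^ 2 + 2 * r * (⟪g, v - u⟫ + b) := by
  have hle := h.le_of_eq_coe ha hb
  rw [norm_sub_sub_smul_sq, norm_sub_sub_smul_sq] at hle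
  have hle' := mul_le_mul_of_nonneg_left hle (by positivity : (0 : ℝ) ≤ 2 * r)
  field_simp at hle'
  linarith

end IsProxPt

end

theorem prox_Q_antitone_general {U : Type*} [NormedAddCommGroup U] [InnerProductSpace ℝ U]
    (φ : U → EReal) (hproper : ∃ x, φ x ≠ ⊤) (hnebot : ∀ x, φ x ≠ ⊥)
    (u g : U) (r t : ℝ) (hr : 0 < r) (ht : 0 < t)
    (qr qt : U)
    (hqr : IsProxPt φ r (u - r • g) qr)
    (hqt : IsProxPt φ t (u - t • g) qt) :
    0 ≤ ((t - r : ℝ) : EReal) * (((⟪g, qr - qt⟫ : ℝ) : EReal) + φ qr - φ qt) := by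
  lift φ qr to ℝ using ⟨hqr.ne_top hproper, hnebot qr⟩ with a ha
  lift φ qt to ℝ using ⟨hqt.ne_top hproper, hnebot qt⟩ with b hb
  have hr_le := hqr.le_of_sub_smul hr ha.symm hb.symm
  have ht_le := hqt.le_of_sub_smul ht hb.symm ha.symm
  have hinner : ⟪g, qr - qt⟫ = ⟪g, qr - u⟫ - ⟪g, qt - u⟫ := by
    rw [← inner_sub_right, sub_sub_sub_cancel_right]
  have hD : 0 ≤ (t - r) * (⟪g, qr - qt⟫ + a - b) := by
    rw [hinner]
    linear_combination (hr_le + ht_le) / 2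
  exact_mod_cast hD

/-- if `q_r ∈ prox_{rφ}(u − r g)` and `q_t ∈ prox_{tφ}(u − t g)`, then
`(t − r)·(⟨g, q_r − q_t⟩ + φ(q_r) − φ(q_t)) ≥ 0`, i.e. the quantity
`Q(s) = ⟨g, q_s − u⟩ + φ(q_s) − φ(u)` is nonincreasing in `s` along any selection
of proximal points. -/
theorem prox_Q_antitone {U : Type*} [NormedAddCommGroup U] [InnerProductSpace ℝ U]
    [CompleteSpace U]
    (φ : U → EReal) (hproper : ∃ x, φ x ≠ ⊤) (hnebot : ∀ x, φ x ≠ ⊥)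
    (hlsc : LowerSemicontinuous φ)
    (u g : U) (r t : ℝ) (hr : 0 < r) (ht : 0 < t)
    (qr qt : U)
    (hqr : IsProxPt φ r (u - r • g) qr)
    (hqt : IsProxPt φ t (u - t • g) qt) :
    0 ≤ ((t - r : ℝ) : EReal) * (((⟪g, qr - qt⟫ : ℝ) : EReal) + φ qr - φ qt) :=
  prox_Q_antitone_general φ hproper hnebot u g r t hr ht qr qt hqr hqt
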